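/- Fix 0 < α < 1 and positive definite operators B, C on a finite-dimensional complex Hilbert space H. If for every positive definite A one has tr(exp(α log A + (1−α) log B)) ≤ tr(exp(α log A + (1−α) log C)), then log B ≤ log C. -/

import Mathlib

/-!
Put `K_X = (1 - α) log X`. Substituting `A = exp (M / α)`, the hypothesis says
`tr exp (M + K_B) ≤ tr exp (M + K_C)` for every Hermitian `M`; take `M = t P` with `P` the
projection onto a unit vector `x`, and write `k = ⟪x, K x⟫`. Jensen's inequality over an
eigenbasis of `t P + K` gives `tr exp (t P + K) ≥ exp (t + k)`. Conversely, splitting vectors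
along `x` and `x⟂` shows `K ≤ (k + δ) P + (‖K‖ + ‖K‖² / δ) (1 - P)`, so every eigenvalue of
`t P + K` lies below a convex combination of `t + k + δ` and `‖K‖ + ‖K‖² / δ` whose weights
sum to `1` over the spectrum; by convexity of `exp`,
`tr exp (t P + K) ≤ exp (t + k + δ) + (d - 1) exp (‖K‖ + ‖K‖² / δ)`. Dividing by `exp t` and
letting `t → ∞`, then `δ → 0`, yields `⟪x, K_B x⟫ ≤ ⟪x, K_C x⟫`.
-/

open Matrix Filter
open scoped ComplexOrder

/-- Functional calculus for Hermitian matrices: apply `f` to the eigenvalues. -/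
noncomputable def mfun {d : ℕ} (f : ℝ → ℝ) (A : Matrix (Fin d) (Fin d) ℂ) :
    Matrix (Fin d) (Fin d) ℂ :=
  if hA : A.IsHermitian then
    (hA.eigenvectorUnitary : Matrix (Fin d) (Fin d) ℂ) *
      Matrix.diagonal (fun i => (f (hA.eigenvalues i) : ℂ)) *
      star (hA.eigenvectorUnitary : Matrix (Fin d) (Fin d) ℂ)
  else 0

noncomputable def mexp {d : ℕ} (A : Matrix (Fin d) (Fin d) ℂ) : Matrix (Fin d) (Fin d) ℂ :=
  mfun Real.exp A

noncomputable def mlog {d : ℕ} (A : Matrix (Fin d) (Fin d) ℂ) : Matrix (Fin d) (Fin d) ℂ :=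
  mfun Real.log A

/-- The Löwner order: `A ≤ B` iff `B - A` is positive semidefinite. -/
def loewnerLE {d : ℕ} (A B : Matrix (Fin d) (Fin d) ℂ) : Prop :=
  (B - A).PosSemidef

/-- The quadratic form ⟨Ax, x⟩. -/
noncomputable def qf {d : ℕ} (A : Matrix (Fin d) (Fin d) ℂ) (x : Fin d → ℂ) : ℂ :=
  star x ⬝ᵥ A.mulVec x

/-- The rank-one projection x ⊗ x. -/
noncomputable def rankOneProj {d : ℕ} (x : Fin d → ℂ) : Matrix (Fin d) (Fin d) ℂ :=
  Matrix.vecMulVec x (star x)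

open RCLike InnerProductSpace

section InnerProductSpace

variable {𝕜 E ι : Type*} [RCLike 𝕜] [NormedAddCommGroup E] [InnerProductSpace 𝕜 E]

local notation "⟪" x ", " y "⟫" => inner 𝕜 x y

/-- Write `v = c • x + w` with `w ⟂ x`; the cross terms of `⟪v, K v⟫` are at most `2 ‖c‖ κ ‖w‖`,
which AM-GM splits as `δ ‖c‖² + κ² ‖w‖² / δ`. -/
theorem re_inner_map_self_le_of_norm_eq_one (K : E →ₗ[𝕜] E) {κ : ℝ}
    (hK : ∀ v, ‖K v‖ ≤ κ * ‖v‖) {x : E} (hx : ‖x‖ = 1) (v : E) {δ : ℝ} (hδ : 0 < δ) :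
    re ⟪v, K v⟫ ≤ (re ⟪x, K x⟫ + δ) * ‖⟪x, v⟫‖ ^ 2 +
      (κ + κ ^ 2 / δ) * (‖v‖ ^ 2 - ‖⟪x, v⟫‖ ^ 2) := by
  set c := ⟪x, v⟫
  set w := v - c • x
  have hv : v = c • x + w := by simp [w]
  have hxw : ⟪x, w⟫ = 0 := by
    simp [w, c, inner_sub_right, inner_smul_right, inner_self_eq_norm_sq_to_K, hx]
  have hw : ‖w‖ ^ 2 = ‖v‖ ^ 2 - ‖c‖ ^ 2 := by
    have := norm_add_sq_eq_norm_sq_add_norm_sq_of_inner_eq_zero (c • x) w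
      (by rw [inner_smul_left, hxw, mul_zero])
    rw [← hv, norm_smul, hx, mul_one] at this
    linarith
  have hκ : 0 ≤ κ := by simpa [hx] using (norm_nonneg _).trans (hK x)
  have hcross : ∀ y z : E, re ⟪y, K z⟫ ≤ ‖y‖ * κ * ‖z‖ := fun y z =>
    (re_le_norm _).trans <| (norm_inner_le_norm _ _).trans <| by
      rw [mul_assoc]; exact mul_le_mul_of_nonneg_left (hK z) (norm_nonneg y)
  have hexpand : re ⟪v, K v⟫ = ‖c‖ ^ 2 * re ⟪x, K x⟫ + re ⟪c • x, K w⟫ + re ⟪w, K (c • x)⟫ +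
      re ⟪w, K w⟫ := by
    rw [hv, map_add, inner_add_left, inner_add_right, inner_add_right, map_add, map_add,
      map_add, map_smul, inner_smul_left, inner_smul_right, ← mul_assoc, RCLike.conj_mul,
      ← ofReal_pow, re_ofReal_mul]
    ring
  have hcw := hcross (c • x) w
  have hwc := hcross w (c • x)
  have hww := hcross w w
  rw [norm_smul, hx, mul_one] at hcw hwc
  have amgm : 2 * (‖c‖ * κ * ‖w‖) ≤ δ * ‖c‖ ^ 2 + κ ^ 2 / δ * ‖w‖ ^ 2 := by
    have e : δ * ‖c‖ ^ 2 + κ ^ 2 / δ * ‖w‖ ^ 2 - 2 * (‖c‖ * κ * ‖w‖) =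
        (δ * ‖c‖ - κ * ‖w‖) ^ 2 / δ := by
      field_simp; ring
    exact sub_nonneg.1 (e ▸ by positivity)
  rw [hexpand, ← hw]
  nlinarith

variable [Fintype ι] {T : E →ₗ[𝕜] E} {u : OrthonormalBasis ι 𝕜 E} {μ : ι → ℝ}

theorem re_inner_map_self_eq_sum (hu : ∀ i, T (u i) = (μ i : 𝕜) • u i) (v : E) :
    re ⟪v, T v⟫ = ∑ i, μ i * ‖⟪u i, v⟫‖ ^ 2 := by
  have hTv : T v = ∑ i, ((μ i : 𝕜) * ⟪u i, v⟫) • u i := by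
    conv_lhs => rw [← u.sum_repr' v]
    simp only [map_sum, map_smul, hu, smul_smul, mul_comm]
  simp only [hTv, inner_sum, inner_smul_right, ← inner_conj_symm (u _) v, mul_assoc,
    RCLike.conj_mul, norm_conj, map_sum, ← ofReal_pow, re_ofReal_mul, ofReal_re]

theorem re_inner_eigenbasis (hu : ∀ i, T (u i) = (μ i : 𝕜) • u i) (i : ι) :
    re ⟪u i, T (u i)⟫ = μ i := by
  rw [hu, inner_smul_right, inner_self_eq_norm_sq_to_K, u.orthonormal.1 i]
  simp

/-- Jensen's inequality for the weights `‖⟪u i, x⟫‖²`, which sum to `1`. -/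
theorem map_re_inner_map_self_le_sum {f : ℝ → ℝ} (hf : ConvexOn ℝ Set.univ f) (hf0 : 0 ≤ f)
    (hu : ∀ i, T (u i) = (μ i : 𝕜) • u i) {x : E} (hx : ‖x‖ = 1) :
    f (re ⟪x, T x⟫) ≤ ∑ i, f (μ i) := by
  have hw : ∑ i, ‖⟪u i, x⟫‖ ^ 2 = 1 := by rw [u.sum_sq_norm_inner_right, hx, one_pow]
  have hw1 : ∀ i, ‖⟪u i, x⟫‖ ^ 2 ≤ 1 := fun i =>
    hw ▸ Finset.single_le_sum (f := fun j => ‖⟪u j, x⟫‖ ^ 2) (fun _ _ => by positivity)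
      (Finset.mem_univ i)
  calc f (re ⟪x, T x⟫) = f (∑ i, ‖⟪u i, x⟫‖ ^ 2 • μ i) := by
        simp_rw [re_inner_map_self_eq_sum hu, smul_eq_mul, mul_comm]
    _ ≤ ∑ i, ‖⟪u i, x⟫‖ ^ 2 • f (μ i) :=
        hf.map_sum_le (fun _ _ => by positivity) hw (fun _ _ => Set.mem_univ _)
    _ ≤ ∑ i, f (μ i) := Finset.sum_le_sum fun i _ =>
        mul_le_of_le_one_left (hf0 _) (hw1 i)

/-- `hT` says `T ≤ a P + b (1 - P)` for the projection `P` onto `x`. Hence each eigenvalue is at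
most `p a + (1 - p) b` with `p = ‖⟪x, u i⟫‖²`, and these weights sum to `1`. -/
theorem sum_map_le_of_re_inner_map_self_le {f : ℝ → ℝ} (hf : ConvexOn ℝ Set.univ f)
    (hf' : Monotone f) (hu : ∀ i, T (u i) = (μ i : 𝕜) • u i) {x : E} (hx : ‖x‖ = 1) {a b : ℝ}
    (hT : ∀ v, re ⟪v, T v⟫ ≤ a * ‖⟪x, v⟫‖ ^ 2 + b * (‖v‖ ^ 2 - ‖⟪x, v⟫‖ ^ 2)) :
    ∑ i, f (μ i) ≤ f a + (Fintype.card ι - 1) * f b := by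
  set p : ι → ℝ := fun i => ‖⟪x, u i⟫‖ ^ 2
  have hp : ∑ i, p i = 1 := by rw [u.sum_sq_norm_inner_left, hx, one_pow]
  have hp1 : ∀ i, p i ≤ 1 := fun i =>
    hp ▸ Finset.single_le_sum (f := p) (fun _ _ => by positivity) (Finset.mem_univ i)
  calc ∑ i, f (μ i) ≤ ∑ i, (p i * f a + (1 - p i) * f b) := by
        refine Finset.sum_le_sum fun i _ => ?_
        have hμ := re_inner_eigenbasis hu i ▸ hT (u i)
        rw [u.orthonormal.1 i, one_pow] at hμ
        refine (hf' hμ).trans ?_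
        simpa [mul_comm] using hf.2 (Set.mem_univ a) (Set.mem_univ b) (by positivity)
          (sub_nonneg.2 (hp1 i)) (add_sub_cancel (p i) 1)
    _ = f a + (Fintype.card ι - 1) * f b := by
        rw [Finset.sum_add_distrib, ← Finset.sum_mul, ← Finset.sum_mul, Finset.sum_sub_distrib, hp]
        simp

end InnerProductSpace

section Matrix

variable {𝕜 n : Type*} [RCLike 𝕜] [Fintype n] [DecidableEq n]

theorem Matrix.IsHermitian.toEuclideanLin_eigenvectorBasis {A : Matrix n n 𝕜}
    (hA : A.IsHermitian) (i : n) :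
    toEuclideanLin A (hA.eigenvectorBasis i) = (hA.eigenvalues i : 𝕜) • hA.eigenvectorBasis i := by
  rw [toLpLin_apply, hA.mulVec_eigenvectorBasis, RCLike.real_smul_eq_coe_smul (K := 𝕜)]
  rfl

theorem toEuclideanLin_vecMulVec_star (x : EuclideanSpace 𝕜 n) :
    toEuclideanLin (vecMulVec x (star x)) = rankOne 𝕜 x x := by
  rw [← symm_toEuclideanLin_rankOne, LinearEquiv.apply_symm_apply]

theorem isHermitian_vecMulVec_star (x : EuclideanSpace 𝕜 n) :
    (vecMulVec x (star x)).IsHermitian := by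
  rw [← isSymmetric_toEuclideanLin_iff, toEuclideanLin_vecMulVec_star]
  exact isSymmetric_rankOne_self x

theorem posSemidef_sub_of_forall_re_inner_le {A B : Matrix n n 𝕜} (hA : A.IsHermitian)
    (hB : B.IsHermitian) (h : ∀ x : EuclideanSpace 𝕜 n, ‖x‖ = 1 →
      re (inner 𝕜 x (toEuclideanLin A x)) ≤ re (inner 𝕜 x (toEuclideanLin B x))) :
    (B - A).PosSemidef := by
  rw [← isPositive_toEuclideanLin_iff]
  refine ⟨isSymmetric_toEuclideanLin_iff.2 (hB.sub hA), fun x => ?_⟩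
  rcases eq_or_ne x 0 with rfl | hx
  · simp
  set y := ((‖x‖⁻¹ : ℝ) : 𝕜) • x
  have hy : ‖y‖ = 1 := by
    rw [norm_smul, norm_algebraMap', norm_inv, norm_norm, inv_mul_cancel₀ (norm_ne_zero_iff.2 hx)]
  have hxy : x = ((‖x‖ : ℝ) : 𝕜) • y := by
    rw [smul_smul, ← ofReal_mul, mul_inv_cancel₀ (norm_ne_zero_iff.2 hx), ofReal_one, one_smul]
  have hscale : ∀ M : Matrix n n 𝕜, re (inner 𝕜 x (toEuclideanLin M x)) =
      ‖x‖ ^ 2 * re (inner 𝕜 y (toEuclideanLin M y)) := fun M => by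
    rw [hxy, map_smul, inner_smul_left, inner_smul_right, conj_ofReal, ← mul_assoc,
      ← ofReal_mul, re_ofReal_mul, norm_smul, norm_algebraMap', norm_norm, hy, mul_one, sq]
  rw [inner_re_symm, map_sub, LinearMap.sub_apply, inner_sub_right, map_sub, hscale, hscale,
    ← mul_sub]
  exact mul_nonneg (sq_nonneg _) (sub_nonneg.2 (h y hy))

end Matrix

section FunctionalCalculus

variable {d : ℕ}

theorem mfun_eq_cfc (f : ℝ → ℝ) {A : Matrix (Fin d) (Fin d) ℂ} (hA : A.IsHermitian) :
    mfun f A = cfc f A := by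
  rw [mfun, dif_pos hA, hA.cfc_eq, Matrix.IsHermitian.cfc]; rfl

theorem isHermitian_mfun (f : ℝ → ℝ) (A : Matrix (Fin d) (Fin d) ℂ) : (mfun f A).IsHermitian := by
  by_cases hA : A.IsHermitian
  · rw [mfun_eq_cfc f hA]
    exact cfc_predicate f A
  · simp [mfun, hA]

theorem trace_mfun (f : ℝ → ℝ) {A : Matrix (Fin d) (Fin d) ℂ} (hA : A.IsHermitian) :
    (mfun f A).trace = ∑ i, (f (hA.eigenvalues i) : ℂ) := by
  rw [mfun, dif_pos hA, Matrix.trace_mul_cycle, Unitary.coe_star_mul_self, one_mul,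
    trace_diagonal]

theorem posDef_mexp {M : Matrix (Fin d) (Fin d) ℂ} (hM : M.IsHermitian) : (mexp M).PosDef := by
  rw [mexp, mfun, dif_pos hM]
  exact (Matrix.IsUnit.posDef_star_right_conjugate_iff Unitary.isUnit_coe).2
    (posDef_diagonal_iff.2 fun i => Complex.zero_lt_real.2 (Real.exp_pos _))

theorem mlog_mexp {M : Matrix (Fin d) (Fin d) ℂ} (hM : M.IsHermitian) : mlog (mexp M) = M := by
  have himg : ContinuousOn Real.log (Real.exp '' spectrum ℝ M) :=
    Real.continuousOn_log.mono <| by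
      rintro - ⟨y, -, rfl⟩
      exact (Real.exp_pos y).ne'
  have hcomp := cfc_comp Real.log Real.exp M hM himg Real.continuous_exp.continuousOn
  rw [mlog, mexp, mfun_eq_cfc _ (isHermitian_mfun _ _), mfun_eq_cfc _ hM, ← hcomp,
    show Real.log ∘ Real.exp = id from funext Real.log_exp]
  exact cfc_id ℝ M hM

end FunctionalCalculus

section TraceBounds

variable {d : ℕ}

theorem isHermitian_smul_rankOneProj (x : EuclideanSpace ℂ (Fin d)) (t : ℝ) :
    ((t : ℂ) • rankOneProj x).IsHermitian :=
  (isHermitian_vecMulVec_star x).smul (Complex.conj_ofReal t)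

theorem re_inner_toEuclideanLin_smul_rankOneProj_add (x v : EuclideanSpace ℂ (Fin d)) (t : ℝ)
    (K : Matrix (Fin d) (Fin d) ℂ) :
    re (inner ℂ v (toEuclideanLin ((t : ℂ) • rankOneProj x + K) v)) =
      t * ‖inner ℂ x v‖ ^ 2 + re (inner ℂ v (toEuclideanLin K v)) := by
  rw [rankOneProj, map_add, map_smul, toEuclideanLin_vecMulVec_star, LinearMap.add_apply,
    LinearMap.smul_apply, ContinuousLinearMap.coe_coe, rankOne_apply, inner_add_right,
    inner_smul_right, inner_smul_right, ← inner_conj_symm x v, RCLike.conj_mul, map_add]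
  simp [← Complex.ofReal_pow, norm_inner_symm]

variable {K : Matrix (Fin d) (Fin d) ℂ} {x : EuclideanSpace ℂ (Fin d)}

theorem re_trace_mexp {M : Matrix (Fin d) (Fin d) ℂ} (hM : M.IsHermitian) :
    (mexp M).trace.re = ∑ i, Real.exp (hM.eigenvalues i) := by
  rw [mexp, trace_mfun _ hM, Complex.re_sum]
  simp only [Complex.ofReal_re]

theorem exp_add_le_re_trace_mexp (hK : K.IsHermitian) (hx : ‖x‖ = 1) (t : ℝ) :
    Real.exp (t + re (inner ℂ x (toEuclideanLin K x))) ≤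
      (mexp ((t : ℂ) • rankOneProj x + K)).trace.re := by
  have hH := (isHermitian_smul_rankOneProj x t).add hK
  have hxx : re (inner ℂ x (toEuclideanLin ((t : ℂ) • rankOneProj x + K) x)) =
      t + re (inner ℂ x (toEuclideanLin K x)) := by
    rw [re_inner_toEuclideanLin_smul_rankOneProj_add, inner_self_eq_norm_sq_to_K, hx]
    simp
  rw [re_trace_mexp hH, ← hxx]
  exact map_re_inner_map_self_le_sum convexOn_exp (fun _ => (Real.exp_pos _).le)
    hH.toEuclideanLin_eigenvectorBasis hx

theorem re_trace_mexp_le (hK : K.IsHermitian) {κ : ℝ}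
    (hκ : ∀ v, ‖toEuclideanLin K v‖ ≤ κ * ‖v‖) (hx : ‖x‖ = 1) (t : ℝ) {δ : ℝ} (hδ : 0 < δ) :
    (mexp ((t : ℂ) • rankOneProj x + K)).trace.re ≤
      Real.exp (t + re (inner ℂ x (toEuclideanLin K x)) + δ) +
        (d - 1) * Real.exp (κ + κ ^ 2 / δ) := by
  have hH := (isHermitian_smul_rankOneProj x t).add hK
  rw [re_trace_mexp hH]
  have := sum_map_le_of_re_inner_map_self_le convexOn_exp Real.exp_monotone
    hH.toEuclideanLin_eigenvectorBasis hx (a := t + re (inner ℂ x (toEuclideanLin K x)) + δ)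
    (b := κ + κ ^ 2 / δ) fun v => by
      have := re_inner_map_self_le_of_norm_eq_one _ hκ hx v hδ
      rw [re_inner_toEuclideanLin_smul_rankOneProj_add]
      linarith
  rwa [Fintype.card_fin] at this

theorem re_inner_le_of_forall_re_trace_mexp_le {KB KC : Matrix (Fin d) (Fin d) ℂ}
    (hKB : KB.IsHermitian) (hKC : KC.IsHermitian) (hx : ‖x‖ = 1)
    (h : ∀ t : ℝ, (mexp ((t : ℂ) • rankOneProj x + KB)).trace.re ≤
      (mexp ((t : ℂ) • rankOneProj x + KC)).trace.re) :
    re (inner ℂ x (toEuclideanLin KB x)) ≤ re (inner ℂ x (toEuclideanLin KC x)) := by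
  obtain ⟨κ, hκ⟩ : ∃ κ, ∀ v, ‖toEuclideanLin KC v‖ ≤ κ * ‖v‖ :=
    ⟨_, (toEuclideanLin KC).toContinuousLinearMap.le_opNorm⟩
  refine le_of_forall_pos_le_add fun δ hδ => ?_
  set kB := re (inner ℂ x (toEuclideanLin KB x))
  set kC := re (inner ℂ x (toEuclideanLin KC x))
  set c := (d - 1) * Real.exp (κ + κ ^ 2 / δ)
  have hbound : ∀ t, Real.exp kB ≤ Real.exp (kC + δ) + c * Real.exp (-t) := fun t => by
    have := (exp_add_le_re_trace_mexp hKB hx t).trans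
      ((h t).trans (re_trace_mexp_le hKC hκ hx t hδ))
    rw [add_assoc, Real.exp_add, Real.exp_add] at this
    have hinv : Real.exp (-t) * Real.exp t = 1 := by
      rw [← Real.exp_add, neg_add_cancel, Real.exp_zero]
    calc Real.exp kB = Real.exp (-t) * (Real.exp t * Real.exp kB) := by
          rw [← mul_assoc, hinv, one_mul]
      _ ≤ Real.exp (-t) * (Real.exp t * Real.exp (kC + δ) + c) :=
          mul_le_mul_of_nonneg_left this (Real.exp_pos _).le
      _ = Real.exp (kC + δ) + c * Real.exp (-t) := by
          rw [mul_add, ← mul_assoc, hinv, one_mul, mul_comm]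
  have hlim : Tendsto (fun t => Real.exp (kC + δ) + c * Real.exp (-t)) atTop
      (nhds (Real.exp (kC + δ))) := by
    simpa using tendsto_const_nhds.add (Real.tendsto_exp_neg_atTop_nhds_zero.const_mul c)
  exact Real.exp_le_exp.1 (ge_of_tendsto' hlim hbound)

end TraceBounds

theorem re_trace_mexp_add_le_of_forall_posDef {d : ℕ} {α : ℝ} (hα : α ≠ 0)
    {KB KC : Matrix (Fin d) (Fin d) ℂ}
    (h : ∀ A : Matrix (Fin d) (Fin d) ℂ, A.PosDef →
      (mexp ((α : ℂ) • mlog A + KB)).trace.re ≤ (mexp ((α : ℂ) • mlog A + KC)).trace.re)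
    {M : Matrix (Fin d) (Fin d) ℂ} (hM : M.IsHermitian) :
    (mexp (M + KB)).trace.re ≤ (mexp (M + KC)).trace.re := by
  have hM' : (((α⁻¹ : ℝ) : ℂ) • M).IsHermitian := hM.smul (Complex.conj_ofReal _)
  have hαM : (α : ℂ) • mlog (mexp (((α⁻¹ : ℝ) : ℂ) • M)) = M := by
    rw [mlog_mexp hM', smul_smul, ← Complex.ofReal_mul, mul_inv_cancel₀ hα, Complex.ofReal_one,
      one_smul]
  simpa only [hαM] using h _ (posDef_mexp hM')

theorem chaotic_order_of_trace_exp_general {d : ℕ} (α : ℝ) (hα0 : 0 < α)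
    (hα1 : α < 1) (B C : Matrix (Fin d) (Fin d) ℂ)
    (h : ∀ A : Matrix (Fin d) (Fin d) ℂ, A.PosDef →
      (mexp ((α : ℂ) • mlog A + ((1 - α : ℝ) : ℂ) • mlog B)).trace.re ≤
        (mexp ((α : ℂ) • mlog A + ((1 - α : ℝ) : ℂ) • mlog C)).trace.re) :
    loewnerLE (mlog B) (mlog C) := by
  have hK : ∀ X : Matrix (Fin d) (Fin d) ℂ, (((1 - α : ℝ) : ℂ) • mlog X).IsHermitian := fun X =>
    (isHermitian_mfun _ X).smul (Complex.conj_ofReal _)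
  have hscale : ∀ (X : Matrix (Fin d) (Fin d) ℂ) (x : EuclideanSpace ℂ (Fin d)),
      re (inner ℂ x (toEuclideanLin (((1 - α : ℝ) : ℂ) • mlog X) x)) =
        (1 - α) * re (inner ℂ x (toEuclideanLin (mlog X) x)) := fun X x => by
    rw [map_smul, LinearMap.smul_apply, inner_smul_right]
    exact Complex.re_ofReal_mul _ _
  refine posSemidef_sub_of_forall_re_inner_le (isHermitian_mfun _ _) (isHermitian_mfun _ _)
    fun x hx => ?_
  have hcomp := re_inner_le_of_forall_re_trace_mexp_le (hK B) (hK C) hx fun t =>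
    re_trace_mexp_add_le_of_forall_posDef hα0.ne' h
      (isHermitian_smul_rankOneProj x t)
  rw [hscale, hscale] at hcomp
  exact le_of_mul_le_mul_left hcomp (sub_pos.2 hα1)

/-- if `tr exp(α log A + (1−α) log B) ≤ tr exp(α log A + (1−α) log C)`
for every positive definite `A`, then `log B ≤ log C`. -/
theorem chaotic_order_of_trace_exp {d : ℕ} (hd : 2 ≤ d) (α : ℝ) (hα0 : 0 < α)
    (hα1 : α < 1) (B C : Matrix (Fin d) (Fin d) ℂ) (hB : B.PosDef) (hC : C.PosDef)
    (h : ∀ A : Matrix (Fin d) (Fin d) ℂ, A.PosDef →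
      (mexp ((α : ℂ) • mlog A + ((1 - α : ℝ) : ℂ) • mlog B)).trace.re ≤
        (mexp ((α : ℂ) • mlog A + ((1 - α : ℝ) : ℂ) • mlog C)).trace.re) :
    loewnerLE (mlog B) (mlog C) :=
  chaotic_order_of_trace_exp_general α hα0 hα1 B C h
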